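/- Let Ψ, Φ and h be as in the canonical construction. For any tight total-cover f of the refined Label Cover instance L, the refined canonical formula Φ_f, obtained as the conjunction of Ψ with the clauses (e′) v(j) → u(ℓ) for all j ∈ [t] and all labels ℓ ∈ f(x) ∪ f(y) over all x ∈ X and y ∈ Y, represents the pure Horn function h. -/

import Mathlib

open Finset

/-- A clause, given by its (fin)sets of positive and negative variables. -/
structure Clause (V : Type*) where
  pos : Finset V
  neg : Finset V
deriving DecidableEq

namespace Clause

variable {V : Type*}

/-- A genuine clause: no variable occurs both positively and negatively. -/
def IsClause (C : Clause V) : Prop := Disjoint C.pos C.neg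

/-- Evaluation of a clause (as a disjunction of literals) under an assignment. -/
def eval (C : Clause V) (a : V → Bool) : Prop :=
  (∃ v ∈ C.pos, a v = true) ∨ (∃ v ∈ C.neg, a v = false)

/-- A pure (definite) Horn clause: exactly one positive literal, its head. -/
def IsPureHorn (C : Clause V) : Prop := ∃ v, C.pos = {v}

end Clause

variable {V : Type*}

/-- Conjunction (as a predicate on assignments) of a set of clauses. -/
def evalSet (S : Set (Clause V)) (a : V → Bool) : Prop := ∀ C ∈ S, C.eval a

/-- Conjunction of the clauses of a CNF, i.e. of a finite set of clauses. -/
def evalCNF (Φ : Finset (Clause V)) (a : V → Bool) : Prop := ∀ C ∈ Φ, C.eval a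

/-- A CNF represents a Boolean function `h`. -/
def Represents (Φ : Finset (Clause V)) (h : (V → Bool) → Prop) : Prop :=
  ∀ a, evalCNF Φ a ↔ h a

/-- A pure Horn CNF: all clauses are pure Horn. -/
def IsPureHornCNF (Φ : Finset (Clause V)) : Prop :=
  ∀ C ∈ Φ, C.IsClause ∧ C.IsPureHorn

/-- The forward chaining closure of a set `Q` of variables with respect to the
pure Horn CNF `Φ`: the smallest set containing `Q` such that whenever `Φ` contains
a clause `S → v` with `S` inside the set, also `v` belongs to it. -/
def fcClosure (Φ : Finset (Clause V)) (Q : Set V) : Set V :=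
  ⋂₀ {T : Set V | Q ⊆ T ∧ ∀ C ∈ Φ, ∀ v : V, C.pos = {v} → ↑C.neg ⊆ T → v ∈ T}

/-- `C` is an implicate of `h`: every assignment falsifying `C` falsifies `h`. -/
def Implicate (h : (V → Bool) → Prop) (C : Clause V) : Prop :=
  ∀ a, ¬ C.eval a → ¬ h a

/-- `C` is a prime implicate of `h`: an implicate from which no literal can be
deleted while remaining an implicate. -/
def PrimeImplicate [DecidableEq V] (h : (V → Bool) → Prop) (C : Clause V) : Prop :=
  C.IsClause ∧ Implicate h C ∧
  (∀ v ∈ C.pos, ¬ Implicate h ⟨C.pos.erase v, C.neg⟩) ∧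
  (∀ v ∈ C.neg, ¬ Implicate h ⟨C.pos, C.neg.erase v⟩)

/-- `C₁` and `C₂` are resolvable on `v`: `v` occurs positively in `C₁`, negatively in
`C₂`, and no other variable occurs with opposite signs in them. -/
def Resolvable (C₁ C₂ : Clause V) (v : V) : Prop :=
  v ∈ C₁.pos ∧ v ∈ C₂.neg ∧
  ∀ w, w ≠ v → ¬(w ∈ C₁.pos ∧ w ∈ C₂.neg) ∧ ¬(w ∈ C₁.neg ∧ w ∈ C₂.pos)

/-- The resolvent `R(C₁,C₂) = (C₁ \ {v}) ∪ (C₂ \ {v̄})`. -/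
def resolventOf [DecidableEq V] (C₁ C₂ : Clause V) (v : V) : Clause V :=
  ⟨C₁.pos.erase v ∪ C₂.pos, C₁.neg ∪ C₂.neg.erase v⟩

/-- A set of clauses closed under resolution. -/
def ResClosed [DecidableEq V] (S : Set (Clause V)) : Prop :=
  ∀ C₁ ∈ S, ∀ C₂ ∈ S, ∀ v, Resolvable C₁ C₂ v → resolventOf C₁ C₂ v ∈ S

/-- The resolution closure of a set of clauses. -/
def resClosure [DecidableEq V] (S : Set (Clause V)) : Set (Clause V) :=
  ⋂₀ {T : Set (Clause V) | S ⊆ T ∧ ResClosed T}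

/-- `I(h)`: the resolution closure of the set of prime implicates of `h`. -/
def implSet [DecidableEq V] (h : (V → Bool) → Prop) : Set (Clause V) :=
  resClosure {C | PrimeImplicate h C}

/-- An exclusive set of clauses of `h`. -/
def ExclusiveSet [DecidableEq V] (h : (V → Bool) → Prop) (Xs : Set (Clause V)) : Prop :=
  Xs ⊆ implSet h ∧
  ∀ C₁ ∈ implSet h, ∀ C₂ ∈ implSet h, ∀ v, Resolvable C₁ C₂ v →
    resolventOf C₁ C₂ v ∈ Xs → C₁ ∈ Xs ∧ C₂ ∈ Xs

/-- The set of variables occurring in a CNF. -/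
def varsOf [DecidableEq V] (Φ : Finset (Clause V)) : Finset V :=
  Φ.biUnion fun C => C.pos ∪ C.neg


/-- A Label Cover instance: a bipartite graph with parts `X` and `Y` and edge set `E`,
label sets `A` (for `X`-vertices) and `B` (for `Y`-vertices), and a nonempty
constraint relation `cst e ⊆ A × B` for every edge `e ∈ E`. -/
structure LabelCover (X Y A B : Type*) where
  E : Finset (X × Y)
  cst : X × Y → Finset (A × B)
  cst_nonempty : ∀ e ∈ E, (cst e).Nonempty

namespace LabelCover

variable {X Y A B : Type*}

/-- A labeling `(f, g)` covers an edge `(x,y)` if for every label `b ∈ g y` there is a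
label `a ∈ f x` with `(a, b)` admissible for the edge. -/
def Covers (I : LabelCover X Y A B) (f : X → Finset A) (g : Y → Finset B)
    (e : X × Y) : Prop :=
  ∀ b ∈ g e.2, ∃ a ∈ f e.1, (a, b) ∈ I.cst e

/-- A total-cover: a labeling (assigning a nonempty label set to every `Y`-vertex)
covering every edge. -/
def IsTotalCover (I : LabelCover X Y A B) (f : X → Finset A) (g : Y → Finset B) : Prop :=
  (∀ y, (g y).Nonempty) ∧ ∀ e ∈ I.E, I.Covers f g e

/-- A total-cover is tight if every `Y`-vertex receives exactly one label. -/
def Tight (g : Y → Finset B) : Prop := ∀ y, (g y).card = 1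

end LabelCover

/-- The cost of a labeling: the average number of labels assigned to `X`-vertices. -/
def lcCost {X A : Type*} [Fintype X] (f : X → Finset A) : ℚ :=
  (∑ x, ((f x).card : ℚ)) / (Fintype.card X : ℚ)


/-- The labels of the refined Label Cover instance: `L ∪ L′`, where `L = ⋃_x L_x`
with `L_x = {x} × A` and `L′ = ⋃_y L′_y` with `L′_y = {y} × B`. -/
abbrev Lab (X Y A B : Type*) := (X × A) ⊕ (Y × B)

/-- The propositional variables of the canonical pure Horn CNF construction:
`u ℓ` for labels `ℓ ∈ L ∪ L′`, `e x y i` and `el x y ℓ′ i` for edges `(x,y)`,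
labels `ℓ′ ∈ L′_y` and indices `i ∈ [d]`, and `v j` for `j ∈ [t]`. -/
inductive PV (X Y A B : Type*) where
  | u : Lab X Y A B → PV X Y A B
  | e : X → Y → ℕ → PV X Y A B
  | el : X → Y → B → ℕ → PV X Y A B
  | v : ℕ → PV X Y A B
deriving DecidableEq

section Canonical

variable {X Y A B : Type*} [Fintype X] [Fintype Y] [Fintype A] [Fintype B]
  [DecidableEq X] [DecidableEq Y] [DecidableEq A] [DecidableEq B]

/-- The (open) neighborhood `N(y) = {z ∈ X : (z,y) ∈ E}`. -/
def Nbr (I : LabelCover X Y A B) (y : Y) : Finset X :=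
  Finset.univ.filter fun z => (z, y) ∈ I.E

/-- Clauses (a): `u(ℓ) ∧ u(ℓ′) → e(x,y,ℓ′,i)` for `(x,y) ∈ E`, `(ℓ,ℓ′) ∈ Π_{(x,y)}`,
`i ∈ [d]`. -/
def clA (I : LabelCover X Y A B) (d : ℕ) : Finset (Clause (PV X Y A B)) :=
  (I.E ×ˢ Finset.Icc 1 d).biUnion fun p =>
    (I.cst p.1).image fun ab =>
      ⟨{PV.el p.1.1 p.1.2 ab.2 p.2},
       {PV.u (Sum.inl (p.1.1, ab.1)), PV.u (Sum.inr (p.1.2, ab.2))}⟩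

/-- Clauses (b): `⋀_{z ∈ N(y)} e(z,y,ℓ′,i) → e(x,y,i)` for `(x,y) ∈ E`, `ℓ′ ∈ L′_y`,
`i ∈ [d]`. -/
def clB (I : LabelCover X Y A B) (d : ℕ) : Finset (Clause (PV X Y A B)) :=
  ((I.E ×ˢ (Finset.univ : Finset B)) ×ˢ Finset.Icc 1 d).image fun p =>
    ⟨{PV.e p.1.1.1 p.1.1.2 p.2},
     (Nbr I p.1.1.2).image fun z => PV.el z p.1.1.2 p.1.2 p.2⟩

/-- Clauses (c): `e(x,y,i) → e(x,y,ℓ′,i)` for `(x,y) ∈ E`, `ℓ′ ∈ L′_y`, `i ∈ [d]`. -/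
def clC (I : LabelCover X Y A B) (d : ℕ) : Finset (Clause (PV X Y A B)) :=
  ((I.E ×ˢ (Finset.univ : Finset B)) ×ˢ Finset.Icc 1 d).image fun p =>
    ⟨{PV.el p.1.1.1 p.1.1.2 p.1.2 p.2}, {PV.e p.1.1.1 p.1.1.2 p.2}⟩

/-- The common body of the clauses (d): all variables `e(x,y,i)`, `(x,y) ∈ E`, `i ∈ [d]`. -/
def bigBody (I : LabelCover X Y A B) (d : ℕ) : Finset (PV X Y A B) :=
  (I.E ×ˢ Finset.Icc 1 d).image fun p => PV.e p.1.1 p.1.2 p.2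

/-- Clauses (d): `⋀_{i ∈ [d]} ⋀_{(x,y) ∈ E} e(x,y,i) → u(ℓ)` for `ℓ ∈ L ∪ L′`. -/
def clD (I : LabelCover X Y A B) (d : ℕ) : Finset (Clause (PV X Y A B)) :=
  (Finset.univ : Finset (Lab X Y A B)).image fun ℓ => ⟨{PV.u ℓ}, bigBody I d⟩

/-- Clauses (e): `v(j) → u(ℓ)` for `j ∈ [t]`, `ℓ ∈ L ∪ L′`. -/
def clE (X Y A B : Type*) [Fintype X] [Fintype Y] [Fintype A] [Fintype B]
    [DecidableEq X] [DecidableEq Y] [DecidableEq A] [DecidableEq B]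
    (t : ℕ) : Finset (Clause (PV X Y A B)) :=
  (Finset.Icc 1 t ×ˢ (Finset.univ : Finset (Lab X Y A B))).image fun p =>
    ⟨{PV.u p.2}, {PV.v p.1}⟩

/-- The canonical formula `Ψ`: clauses of types (a)–(d). -/
def PsiCNF (I : LabelCover X Y A B) (d : ℕ) : Finset (Clause (PV X Y A B)) :=
  clA I d ∪ clB I d ∪ clC I d ∪ clD I d

/-- The canonical formula `Φ`: clauses of types (a)–(e). -/
def PhiCNF (I : LabelCover X Y A B) (d t : ℕ) : Finset (Clause (PV X Y A B)) :=
  PsiCNF I d ∪ clE X Y A B t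

/-- The pure Horn function `h` represented by the canonical formula `Φ`. -/
def hFun (I : LabelCover X Y A B) (d t : ℕ) : (PV X Y A B → Bool) → Prop :=
  fun a => evalCNF (PhiCNF I d t) a

/-- The pure Horn function `g` represented by the canonical formula `Ψ`. -/
def gFun (I : LabelCover X Y A B) (d : ℕ) : (PV X Y A B → Bool) → Prop :=
  fun a => evalCNF (PsiCNF I d) a

end Canonical


/-- The clauses (e′): `v(j) → u(ℓ)` for all `j ∈ [t]` and all labels
`ℓ ∈ f(x) ∪ f(y)`, over all `x ∈ X` and `y ∈ Y`, for a labeling `(f, g)`. -/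
def clE' {X Y A B : Type*} [Fintype X] [Fintype Y] [Fintype A] [Fintype B]
    [DecidableEq X] [DecidableEq Y] [DecidableEq A] [DecidableEq B]
    (f : X → Finset A) (g : Y → Finset B) (t : ℕ) : Finset (Clause (PV X Y A B)) :=
  (Finset.Icc 1 t ×ˢ
    (((Finset.univ : Finset X).biUnion fun x =>
        (f x).image fun a => (Sum.inl (x, a) : Lab X Y A B)) ∪
     ((Finset.univ : Finset Y).biUnion fun y =>
        (g y).image fun b => (Sum.inr (y, b) : Lab X Y A B)))).image fun p =>
    ⟨{PV.u p.2}, {PV.v p.1}⟩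

/-!
The clauses (e′) are among the clauses (e), so `Φ` implies `Φ_f`. Conversely, let `Φ_f` hold
and `v(j)` be true. By (e′) every label of the cover is true, and forward chaining through `Ψ`
fires: since the labeling covers every edge, clauses (a) make `e(z,y,ℓ′,i)` true for all
`z ∈ N(y)` and any `ℓ′ ∈ f(y)`, clauses (b) then make every `e(x,y,i)` true, and clauses (d)
make every `u(ℓ)` true, which is all that clauses (e) demand.
-/

namespace Clause

theorem eval_mk_singleton_iff (w : V) (S : Finset V) (σ : V → Bool) :
    (⟨{w}, S⟩ : Clause V).eval σ ↔ ((∀ v ∈ S, σ v = true) → σ w = true) := by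
  simp only [eval, mem_singleton, exists_eq_left, Bool.eq_false_iff]
  by_cases hS : ∀ v ∈ S, σ v = true
  · exact ⟨fun h _ => h.resolve_right fun ⟨v, hv, hf⟩ => hf (hS v hv), fun h => .inl (h hS)⟩
  · push Not at hS
    exact ⟨fun _ h => absurd h (by simpa using hS), fun _ => .inr hS⟩

end Clause

theorem evalCNF_union [DecidableEq V] {Φ Ψ : Finset (Clause V)} {σ : V → Bool} :
    evalCNF (Φ ∪ Ψ) σ ↔ evalCNF Φ σ ∧ evalCNF Ψ σ :=
  forall_mem_union

theorem evalCNF_of_subset {Φ Ψ : Finset (Clause V)} {σ : V → Bool} (h : Φ ⊆ Ψ)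
    (hσ : evalCNF Ψ σ) : evalCNF Φ σ :=
  fun C hC => hσ C (h hC)

section Canonical

variable {X Y A B : Type*} [DecidableEq X] [DecidableEq Y] [DecidableEq A] [DecidableEq B]
  {I : LabelCover X Y A B} {d t : ℕ} {σ : PV X Y A B → Bool}

theorem el_true_of_evalCNF_clA (hσ : evalCNF (clA I d) σ) {x : X} {y : Y} {a : A} {b : B}
    {i : ℕ} (hxy : (x, y) ∈ I.E) (hab : (a, b) ∈ I.cst (x, y)) (hi : i ∈ Icc 1 d)
    (ha : σ (.u (.inl (x, a))) = true) (hb : σ (.u (.inr (y, b))) = true) :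
    σ (.el x y b i) = true := by
  refine (Clause.eval_mk_singleton_iff _ {.u (.inl (x, a)), .u (.inr (y, b))} σ).1
    (hσ _ ?_) ?_
  · exact mem_biUnion.2 ⟨((x, y), i), mem_product.2 ⟨hxy, hi⟩, mem_image_of_mem _ hab⟩
  · simp [ha, hb]

theorem e_true_of_evalCNF_clB [Fintype X] [Fintype B] (hσ : evalCNF (clB I d) σ) {x : X}
    {y : Y} {i : ℕ} (hxy : (x, y) ∈ I.E) (hi : i ∈ Icc 1 d) (b : B)
    (hb : ∀ z, (z, y) ∈ I.E → σ (.el z y b i) = true) : σ (.e x y i) = true := by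
  refine (Clause.eval_mk_singleton_iff _ ((Nbr I y).image fun z => .el z y b i) σ).1
    (hσ _ ?_) ?_
  · exact mem_image.2 ⟨(((x, y), b), i), by simp [hxy, hi], rfl⟩
  · simpa [Nbr] using hb

theorem u_true_of_evalCNF_clD [Fintype X] [Fintype Y] [Fintype A] [Fintype B]
    (hσ : evalCNF (clD I d) σ)
    (he : ∀ x y, (x, y) ∈ I.E → ∀ i ∈ Icc 1 d, σ (.e x y i) = true) (ℓ : Lab X Y A B) :
    σ (.u ℓ) = true := by
  refine (Clause.eval_mk_singleton_iff _ _ σ).1 (hσ _ (mem_image_of_mem _ (mem_univ ℓ))) ?_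
  simp only [bigBody, forall_mem_image, mem_product]
  exact fun p hp => he _ _ hp.1 _ hp.2

theorem u_true_of_evalCNF_PsiCNF [Fintype X] [Fintype Y] [Fintype A] [Fintype B]
    {f : X → Finset A} {g : Y → Finset B} (hσ : evalCNF (PsiCNF I d) σ)
    (hcov : I.IsTotalCover f g) (hf : ∀ x, ∀ a ∈ f x, σ (.u (.inl (x, a))) = true)
    (hg : ∀ y, ∀ b ∈ g y, σ (.u (.inr (y, b))) = true) (ℓ : Lab X Y A B) :
    σ (.u ℓ) = true := by
  simp only [PsiCNF, evalCNF_union] at hσ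
  obtain ⟨⟨⟨hA, hB⟩, -⟩, hD⟩ := hσ
  refine u_true_of_evalCNF_clD hD (fun x y hxy i hi => ?_) ℓ
  obtain ⟨b, hb⟩ := hcov.1 y
  refine e_true_of_evalCNF_clB hB hxy hi b fun z hzy => ?_
  obtain ⟨a, ha, hab⟩ := hcov.2 (z, y) hzy b hb
  exact el_true_of_evalCNF_clA hA hzy hab hi (hf z a ha) (hg y b hb)

variable [Fintype X] [Fintype Y] [Fintype A] [Fintype B]

theorem evalCNF_clE_iff : evalCNF (clE X Y A B t) σ ↔
    ∀ j ∈ Icc 1 t, σ (.v j) = true → ∀ ℓ, σ (.u ℓ) = true := by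
  simp only [evalCNF, clE, forall_mem_image, mem_product, mem_univ, and_true, Prod.forall,
    Clause.eval_mk_singleton_iff, mem_singleton, forall_eq]
  exact ⟨fun h j hj hv ℓ => h j ℓ hj hv, fun h j ℓ hj hv => h j hj hv ℓ⟩

theorem u_true_of_evalCNF_clE' {f : X → Finset A} {g : Y → Finset B}
    (hσ : evalCNF (clE' f g t) σ) {j : ℕ} (hj : j ∈ Icc 1 t) (hv : σ (.v j) = true) :
    (∀ x, ∀ a ∈ f x, σ (.u (.inl (x, a))) = true) ∧
      ∀ y, ∀ b ∈ g y, σ (.u (.inr (y, b))) = true := by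
  simp only [evalCNF, clE', forall_mem_image, mem_product, Prod.forall,
    Clause.eval_mk_singleton_iff, mem_singleton, forall_eq] at hσ
  exact ⟨fun x a ha => hσ j _ ⟨hj, by simp [ha]⟩ hv, fun y b hb => hσ j _ ⟨hj, by simp [hb]⟩ hv⟩

theorem clE'_subset_clE (f : X → Finset A) (g : Y → Finset B) :
    clE' f g t ⊆ clE X Y A B t :=
  image_subset_image (product_subset_product_right (subset_univ _))

end Canonical

theorem refined_canonical_represents_general
    {X Y A B : Type*} [Fintype X] [Fintype Y] [Fintype A] [Fintype B]
    [DecidableEq X] [DecidableEq Y] [DecidableEq A] [DecidableEq B]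
    (I : LabelCover X Y A B) (d t : ℕ)
    (f : X → Finset A) (g : Y → Finset B)
    (hcov : I.IsTotalCover f g) :
    Represents (PsiCNF I d ∪ clE' f g t) (hFun I d t) := by
  intro σ
  rw [hFun, PhiCNF, evalCNF_union, evalCNF_union]
  refine ⟨fun ⟨hΨ, hE'⟩ => ⟨hΨ, evalCNF_clE_iff.2 fun j hj hv => ?_⟩,
    fun ⟨hΨ, hE⟩ => ⟨hΨ, evalCNF_of_subset (clE'_subset_clE f g) hE⟩⟩
  obtain ⟨hf, hg⟩ := u_true_of_evalCNF_clE' hE' hj hv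
  exact u_true_of_evalCNF_PsiCNF hΨ hcov hf hg

/-- For any tight total-cover `(f, g)` of the (refined) Label Cover
instance, the refined canonical formula `Φ_f = Ψ ∧ (e′)` represents the canonical
pure Horn function `h`. -/
theorem refined_canonical_represents
    {X Y A B : Type*} [Fintype X] [Fintype Y] [Fintype A] [Fintype B]
    [DecidableEq X] [DecidableEq Y] [DecidableEq A] [DecidableEq B]
    [Nonempty X] [Nonempty Y]
    (I : LabelCover X Y A B) (d t : ℕ) (hd : 1 ≤ d) (ht : 1 ≤ t)
    (hnoIsoX : ∀ x : X, ∃ y, (x, y) ∈ I.E)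
    (hnoIsoY : ∀ y : Y, ∃ x, (x, y) ∈ I.E)
    (f : X → Finset A) (g : Y → Finset B)
    (hcov : I.IsTotalCover f g) (htight : LabelCover.Tight g) :
    Represents (PsiCNF I d ∪ clE' f g t) (hFun I d t) :=
  refined_canonical_represents_general I d t f g hcov
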